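/- arXiv:2102.07155 — 3 statements merged into one kernel-verified Lean document; each statement's English description precedes it below -/
import Mathlib

section
/- Given the MIMO rate R(V) = log det(I_L + V^H H^H J̄^{-1} H V) with J̄ positive definite, R(V) = max over positive definite W and matrices G of [log det(W) - tr(W·E(V,G)) + L], where E(V,G) = I_L - 2Re(G^H H V) + G^H (H V V^H H^H + J̄) G, and the optimizer is G* = (H V V^H H^H + J̄)^{-1} H V, W* = E(V,G*)^{-1}. -/
/-!
Completing the square in `G` gives `E(G) = E(G⋆) + (G - G⋆)ᴴ (H V Vᴴ Hᴴ + J̄) (G - G⋆)`, so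
`E(G⋆)` is Loewner-minimal, and the push-through identity gives `E(G⋆)⁻¹ = I + Vᴴ Hᴴ J̄⁻¹ H V`.
For fixed `S ≻ 0`, applying `log x ≤ x - 1` to the eigenvalues of `S^{1/2} W S^{1/2}` gives
`log det W - tr (W S) + L ≤ log det S⁻¹`, with equality at `W = S⁻¹`.
-/

open Matrix
open scoped ComplexOrder MatrixOrder

namespace Matrix

variable {𝕜 n : Type*} [RCLike 𝕜] [Fintype n] [DecidableEq n]

lemma PosSemidef.trace_mul_nonneg {A B : Matrix n n 𝕜} (hA : A.PosSemidef) (hB : B.PosSemidef) :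
    0 ≤ (A * B).trace := by
  have hsq : A * B = CFC.sqrt A * (CFC.sqrt A * B) := by
    rw [← mul_assoc, CFC.sqrt_mul_sqrt_self A hA.nonneg]
  have hself : (CFC.sqrt A)ᴴ = CFC.sqrt A := (CFC.sqrt_nonneg A).posSemidef.1
  have hcyc : (A * B).trace = ((CFC.sqrt A)ᴴ * B * CFC.sqrt A).trace := by
    rw [hsq, trace_mul_comm, hself, mul_assoc]
  rw [hcyc]
  exact (hB.conjTranspose_mul_mul_same _).trace_nonneg

lemma PosDef.re_det_mul {A : Matrix n n 𝕜} (hA : A.PosDef) (B : Matrix n n 𝕜) :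
    RCLike.re (A * B).det = RCLike.re A.det * RCLike.re B.det := by
  rw [det_mul, RCLike.mul_re, (RCLike.pos_iff.mp hA.det_pos).2, zero_mul, sub_zero]

lemma PosDef.log_det_inv {A : Matrix n n 𝕜} (hA : A.PosDef) :
    Real.log (RCLike.re A⁻¹.det) = - Real.log (RCLike.re A.det) := by
  have hprod := hA.inv.re_det_mul A
  rw [nonsing_inv_mul _ ((isUnit_iff_isUnit_det A).mp hA.isUnit), det_one, RCLike.one_re] at hprod
  rw [eq_neg_iff_add_eq_zero, ← Real.log_mul, ← hprod, Real.log_one]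
  · exact (RCLike.pos_iff.mp hA.inv.det_pos).1.ne'
  · exact (RCLike.pos_iff.mp hA.det_pos).1.ne'

lemma PosDef.log_det_le_trace_sub_card {A : Matrix n n 𝕜} (hA : A.PosDef) :
    Real.log (RCLike.re A.det) ≤ RCLike.re A.trace - Fintype.card n := by
  have hdet : RCLike.re A.det = ∏ i, hA.1.eigenvalues i := by
    rw [hA.1.det_eq_prod_eigenvalues, ← RCLike.ofReal_prod, RCLike.ofReal_re]
  have htr : RCLike.re A.trace = ∑ i, hA.1.eigenvalues i := by
    rw [hA.1.trace_eq_sum_eigenvalues, ← RCLike.ofReal_sum, RCLike.ofReal_re]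
  rw [hdet, htr, Real.log_prod fun i _ => (hA.eigenvalues_pos i).ne']
  calc ∑ i, Real.log (hA.1.eigenvalues i)
      ≤ ∑ i, (hA.1.eigenvalues i - 1) :=
        Finset.sum_le_sum fun i _ => Real.log_le_sub_one_of_pos (hA.eigenvalues_pos i)
    _ = ∑ i, hA.1.eigenvalues i - Fintype.card n := by simp

lemma PosDef.log_det_sub_trace_mul_le {W S : Matrix n n 𝕜} (hW : W.PosDef) (hS : S.PosDef) :
    Real.log (RCLike.re W.det) - RCLike.re (W * S).trace + Fintype.card n ≤
      Real.log (RCLike.re S⁻¹.det) := by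
  set Q := CFC.sqrt S
  have hQself : Qᴴ = Q := (CFC.sqrt_nonneg S).posSemidef.1
  have hQQ : Q * Q = S := CFC.sqrt_mul_sqrt_self S hS.posSemidef.nonneg
  have hQ : IsUnit Q := by
    refine (isUnit_iff_isUnit_det Q).mpr (isUnit_iff_ne_zero.mpr fun h => hS.det_pos.ne' ?_)
    rw [← hQQ, det_mul, h, zero_mul]
  have hP : (Qᴴ * W * Q).PosDef := hW.conjTranspose_mul_mul_same (mulVec_injective_of_isUnit hQ)
  have htr : (Qᴴ * W * Q).trace = (W * S).trace := by
    rw [hQself, mul_assoc, trace_mul_comm, mul_assoc, hQQ]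
  have hdet : (Qᴴ * W * Q).det = (W * S).det := by
    rw [← hQQ, det_mul, det_mul, det_mul, det_mul, hQself]; ring
  have hlog := hP.log_det_le_trace_sub_card
  rw [htr, hdet, hW.re_det_mul, Real.log_mul (RCLike.pos_iff.mp hW.det_pos).1.ne'
    (RCLike.pos_iff.mp hS.det_pos).1.ne'] at hlog
  rw [hS.log_det_inv]
  linarith

end Matrix

section MMSE

variable {𝕜 m k : Type*} [RCLike 𝕜] [Fintype m] [DecidableEq m] [Fintype k] [DecidableEq k]

-- `X` stands for the effective channel `H V`.
def mseMatrix (X : Matrix m k 𝕜) (J : Matrix m m 𝕜) (G : Matrix m k 𝕜) : Matrix k k 𝕜 :=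
  1 - Gᴴ * X - (Gᴴ * X)ᴴ + Gᴴ * (X * Xᴴ + J) * G

noncomputable def mmseReceiver (X : Matrix m k 𝕜) (J : Matrix m m 𝕜) : Matrix m k 𝕜 :=
  (X * Xᴴ + J)⁻¹ * X

variable (X : Matrix m k 𝕜) {J : Matrix m m 𝕜} (hJ : J.PosDef)
include hJ

omit [DecidableEq m] [DecidableEq k] in
lemma posDef_mul_conjTranspose_add : (X * Xᴴ + J).PosDef :=
  hJ.posSemidef_add (posSemidef_self_mul_conjTranspose X)

lemma mseMatrix_eq_add (G : Matrix m k 𝕜) :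
    mseMatrix X J G = 1 - Xᴴ * (X * Xᴴ + J)⁻¹ * X +
      (G - mmseReceiver X J)ᴴ * (X * Xᴴ + J) * (G - mmseReceiver X J) := by
  have hA := posDef_mul_conjTranspose_add X hJ
  unfold mseMatrix mmseReceiver
  set A := X * Xᴴ + J
  have hAdet : IsUnit A.det := (isUnit_iff_isUnit_det A).mp hA.isUnit
  simp only [conjTranspose_sub, conjTranspose_mul, hA.1.inv.eq, conjTranspose_conjTranspose,
    Matrix.sub_mul, Matrix.mul_sub, Matrix.mul_assoc, nonsing_inv_mul_cancel_left _ _ hAdet,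
    mul_nonsing_inv_cancel_left _ _ hAdet]
  abel

lemma mseMatrix_mmseReceiver :
    mseMatrix X J (mmseReceiver X J) = 1 - Xᴴ * (X * Xᴴ + J)⁻¹ * X := by
  simp [mseMatrix_eq_add X hJ]

lemma mseMatrix_mmseReceiver_mul :
    mseMatrix X J (mmseReceiver X J) * (1 + Xᴴ * J⁻¹ * X) = 1 := by
  have hA := posDef_mul_conjTranspose_add X hJ
  have hAdet : IsUnit (X * Xᴴ + J).det := (isUnit_iff_isUnit_det _).mp hA.isUnit
  have hJdet : IsUnit J.det := (isUnit_iff_isUnit_det J).mp hJ.isUnit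
  have push : (X * Xᴴ + J) * (J⁻¹ * X) = X + X * (Xᴴ * J⁻¹ * X) := by
    simp only [Matrix.add_mul, Matrix.mul_assoc, mul_nonsing_inv_cancel_left _ _ hJdet]
    abel
  have key : Xᴴ * J⁻¹ * X =
      Xᴴ * (X * Xᴴ + J)⁻¹ * X + Xᴴ * (X * Xᴴ + J)⁻¹ * X * (Xᴴ * J⁻¹ * X) := by
    calc Xᴴ * J⁻¹ * X = Xᴴ * ((X * Xᴴ + J)⁻¹ * ((X * Xᴴ + J) * (J⁻¹ * X))) := by
          rw [nonsing_inv_mul_cancel_left _ _ hAdet, Matrix.mul_assoc]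
      _ = _ := by rw [push, Matrix.mul_add, Matrix.mul_add]; simp only [Matrix.mul_assoc]
  rw [mseMatrix_mmseReceiver X hJ, Matrix.sub_mul, Matrix.one_mul, Matrix.mul_add, Matrix.mul_one,
    ← key]
  abel

lemma inv_mseMatrix_mmseReceiver :
    (mseMatrix X J (mmseReceiver X J))⁻¹ = 1 + Xᴴ * J⁻¹ * X :=
  inv_eq_right_inv (mseMatrix_mmseReceiver_mul X hJ)

lemma posDef_one_add_conjTranspose_mul_inv_mul : (1 + Xᴴ * J⁻¹ * X).PosDef :=
  PosDef.one.add_posSemidef (hJ.inv.posSemidef.conjTranspose_mul_mul_same X)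

lemma posDef_mseMatrix_mmseReceiver : (mseMatrix X J (mmseReceiver X J)).PosDef := by
  rw [← inv_eq_right_inv (mul_eq_one_comm.mp (mseMatrix_mmseReceiver_mul X hJ))]
  exact (posDef_one_add_conjTranspose_mul_inv_mul X hJ).inv

lemma trace_mul_mseMatrix_mmseReceiver_le {W : Matrix k k 𝕜} (hW : W.PosSemidef)
    (G : Matrix m k 𝕜) :
    (W * mseMatrix X J (mmseReceiver X J)).trace ≤ (W * mseMatrix X J G).trace := by
  rw [mseMatrix_eq_add X hJ G, ← mseMatrix_mmseReceiver X hJ, Matrix.mul_add, trace_add]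
  exact le_add_of_nonneg_right <| hW.trace_mul_nonneg <|
    (posDef_mul_conjTranspose_add X hJ).posSemidef.conjTranspose_mul_mul_same _

end MMSE

/-- The wMMSE equivalence (Shi et al.): the MIMO rate
`R(V) = log det (I + Vᴴ Hᴴ J̄⁻¹ H V)` is the maximum over positive definite
weights `W` and receivers `G` of `log det W - tr (W E(V,G)) + L`, where
`E(V,G) = I - G^H H V - (G^H H V)^H + G^H (H V V^H H^H + J̄) G`, and the
maximum is attained at `G⋆ = (H V Vᴴ Hᴴ + J̄)⁻¹ H V`, `W⋆ = E(V,G⋆)⁻¹`. -/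
theorem wmmse_rate_equivalence {L M : ℕ}
    (H : Matrix (Fin L) (Fin M) ℂ) (V : Matrix (Fin M) (Fin L) ℂ)
    (Jbar : Matrix (Fin L) (Fin L) ℂ) (hJ : Jbar.PosDef)
    (E : Matrix (Fin L) (Fin L) ℂ → Matrix (Fin L) (Fin L) ℂ)
    (hE : ∀ G, E G = 1 - Gᴴ * H * V - (Gᴴ * H * V)ᴴ
        + Gᴴ * (H * V * Vᴴ * Hᴴ + Jbar) * G)
    (R : ℝ) (hR : R = Real.log (1 + Vᴴ * Hᴴ * Jbar⁻¹ * H * V).det.re)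
    (Gstar Wstar : Matrix (Fin L) (Fin L) ℂ)
    (hG : Gstar = (H * V * Vᴴ * Hᴴ + Jbar)⁻¹ * (H * V))
    (hW : Wstar = (E Gstar)⁻¹) :
    IsGreatest
      {x : ℝ | ∃ (W G : Matrix (Fin L) (Fin L) ℂ), W.PosDef ∧
        x = Real.log W.det.re - ((W * E G).trace).re + L} R ∧
      Real.log Wstar.det.re - ((Wstar * E Gstar).trace).re + L = R := by
  have hEmse : E = mseMatrix (H * V) Jbar := funext fun G => by
    rw [hE, mseMatrix]
    simp only [conjTranspose_mul, Matrix.mul_assoc]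
  have hGstar : Gstar = mmseReceiver (H * V) Jbar := by
    rw [hG, mmseReceiver]
    simp only [conjTranspose_mul, Matrix.mul_assoc]
  subst hEmse hGstar
  set Eopt := mseMatrix (H * V) Jbar (mmseReceiver (H * V) Jbar)
  have hopt : Eopt.PosDef := posDef_mseMatrix_mmseReceiver (H * V) hJ
  have hWstar : Wstar = 1 + (H * V)ᴴ * Jbar⁻¹ * (H * V) := by
    rw [hW, inv_mseMatrix_mmseReceiver _ hJ]
  have hRW : R = Real.log Wstar.det.re := by
    rw [hR, hWstar]
    simp only [conjTranspose_mul, Matrix.mul_assoc]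
  have hattain : Real.log Wstar.det.re - (Wstar * Eopt).trace.re + L = R := by
    rw [hRW, hW, nonsing_inv_mul _ ((isUnit_iff_isUnit_det _).mp hopt.isUnit), trace_one]
    simp
  refine ⟨⟨⟨Wstar, _, hWstar ▸ posDef_one_add_conjTranspose_mul_inv_mul _ hJ, hattain.symm⟩, ?_⟩,
    hattain⟩
  rintro _ ⟨W, G, hWpd, rfl⟩
  calc _ ≤ Real.log W.det.re - (W * Eopt).trace.re + L := by
        gcongr
        exact trace_mul_mseMatrix_mmseReceiver_le _ hJ hWpd.posSemidef G
    _ ≤ Real.log Eopt⁻¹.det.re := by simpa using hWpd.log_det_sub_trace_mul_le hopt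
    _ = R := by rw [← hW, hRW]
end

section
/- In the wMMSE framework, if the weighted MSE objective ∑ᵢ αᵢ tr(Wᵢ Eᵢ) with optimal weights Wᵢ = Eᵢ^{-1} is non-increasing in the iteration index q, then the weighted sum-rate ∑ᵢ αᵢ log det(Eᵢ^{-1}) is non-decreasing in q. -/
open Matrix
open scoped ComplexOrder

/-- In the wMMSE framework, if the weighted MSE objective (with optimal
weights `Wᵢ = Eᵢ⁻¹` plugged in, i.e. `∑ᵢ αᵢ (tr(Wᵢ Eᵢ) - log det Wᵢ)`) is
non-increasing in the iteration index `q`, then the weighted sum-rate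
`∑ᵢ αᵢ log det (Eᵢ⁻¹)` is non-decreasing in `q`. -/
theorem wmmse_sumrate_nondecreasing {N L : ℕ}
    (α : Fin N → ℝ) (hα : ∀ i, 0 < α i)
    (E : Fin N → ℕ → Matrix (Fin L) (Fin L) ℂ)
    (hE : ∀ i q, (E i q).PosDef)
    (hdec : ∀ q,
      (∑ i, α i * ((((E i (q + 1))⁻¹ * E i (q + 1)).trace).re
          - Real.log ((E i (q + 1))⁻¹.det.re)))
        ≤ ∑ i, α i * ((((E i q)⁻¹ * E i q).trace).re
          - Real.log ((E i q)⁻¹.det.re))) :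
    Monotone (fun q => ∑ i, α i * Real.log ((E i q)⁻¹.det.re)) := by
  have key : ∀ i q, (((E i q)⁻¹ * E i q).trace).re = (L : ℝ) := by
    intro i q
    rw [Matrix.nonsing_inv_mul _ (hE i q).det_pos.ne'.isUnit]
    simp [Matrix.trace_one]
  apply monotone_nat_of_le_succ
  intro q
  have h := hdec q
  simp only [key] at h
  have expand : ∀ r : ℕ,
      ∑ i, α i * ((L : ℝ) - Real.log ((E i r)⁻¹.det.re))
        = (∑ i, α i * (L : ℝ)) - ∑ i, α i * Real.log ((E i r)⁻¹.det.re) := by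
    intro r
    rw [← Finset.sum_sub_distrib]
    congr 1
    ext i
    ring
  rw [expand, expand] at h
  linarith
end

section
/- Given K positive definite weight matrices W_j, channel matrices H_j, receivers G_j, weights α_j > 0, and multiplier μ ≥ 0, let K₀ = ∑_j α_j H_j^H G_j W_j G_j^H H_j and suppose K₀ + μ I is positive definite; then the minimizer over V of ∑_j α_j tr(W_j E_j(V)) + μ tr(V V^H), in which the only V-dependent terms are -2α_i Re(tr(W_i G_i^H H_i V)) + tr(V^H K₀ V) + μ tr(V V^H), is V* = α_i (K₀ + μI)^{-1} H_i^H G_i W_i. -/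
open Matrix
open scoped ComplexOrder

lemma psd_trace_re_nonneg {n : Type*} [Fintype n] [DecidableEq n]
    {A : Matrix n n ℂ} (h : A.PosSemidef) : 0 ≤ A.trace.re := by
  have h1 : ∀ j, 0 ≤ (A j j).re := by
    intro j
    have := h.re_dotProduct_nonneg (Pi.single j 1)
    simpa [dotProduct, mulVec, Pi.single_apply, Finset.sum_ite_eq] using this
  rw [Matrix.trace]
  simpa [Matrix.diag] using Finset.sum_nonneg fun j _ => h1 j

/-- Closed-form precoder update of the wMMSE algorithm: the minimizer over `V`
of the `V`-dependent part
`-2 αᵢ Re tr(Wᵢ Gᵢᴴ Hᵢ V) + Re tr(Vᴴ K₀ V) + μ Re tr(V Vᴴ)`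
with `K₀ = ∑ⱼ αⱼ Hⱼᴴ Gⱼ Wⱼ Gⱼᴴ Hⱼ` and `K₀ + μ I` positive definite is
`V⋆ = αᵢ (K₀ + μ I)⁻¹ Hᵢᴴ Gᵢ Wᵢ`. -/
theorem wmmse_precoder_update {N L M : ℕ}
    (W : Fin N → Matrix (Fin L) (Fin L) ℂ) (hW : ∀ j, (W j).PosDef)
    (H : Fin N → Matrix (Fin L) (Fin M) ℂ)
    (G : Fin N → Matrix (Fin L) (Fin L) ℂ)
    (α : Fin N → ℝ) (hα : ∀ j, 0 < α j)
    (μ : ℝ) (hμ : 0 ≤ μ) (i : Fin N)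
    (K₀ : Matrix (Fin M) (Fin M) ℂ)
    (hK : K₀ = ∑ j, (α j : ℂ) • ((H j)ᴴ * G j * W j * (G j)ᴴ * H j))
    (hPD : (K₀ + (μ : ℂ) • (1 : Matrix (Fin M) (Fin M) ℂ)).PosDef)
    (f : Matrix (Fin M) (Fin L) ℂ → ℝ)
    (hf : ∀ V, f V = -2 * α i * ((W i * (G i)ᴴ * H i * V).trace).re
        + ((Vᴴ * K₀ * V).trace).re + μ * ((V * Vᴴ).trace).re)
    (Vstar : Matrix (Fin M) (Fin L) ℂ)
    (hV : Vstar = (α i : ℂ) •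
      ((K₀ + (μ : ℂ) • (1 : Matrix (Fin M) (Fin M) ℂ))⁻¹
        * ((H i)ᴴ * G i * W i))) :
    ∀ V, f Vstar ≤ f V := by
  set K : Matrix (Fin M) (Fin M) ℂ := K₀ + (μ : ℂ) • 1 with hKdef
  have hKH : K.IsHermitian := hPD.isHermitian
  have hAH : ((H i)ᴴ * G i * W i)ᴴ = W i * (G i)ᴴ * H i := by
    simp [Matrix.conjTranspose_mul, (hW i).1.eq, Matrix.mul_assoc]
  have hKinv : K * K⁻¹ = 1 := Matrix.mul_nonsing_inv _ (isUnit_iff_isUnit_det _ |>.1 hPD.isUnit)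
  have hKV : K * Vstar = (α i : ℂ) • ((H i)ᴴ * G i * W i) := by
    rw [hV, Matrix.mul_smul, ← Matrix.mul_assoc, hKinv, Matrix.one_mul]
  have hVsK : Vstarᴴ * K = (α i : ℂ) • (W i * (G i)ᴴ * H i) := by
    have h2 := congrArg conjTranspose hKV
    simpa [Matrix.conjTranspose_mul, hKH.eq, hAH, Complex.conj_ofReal] using h2
  -- key identity
  have key : ∀ V : Matrix (Fin M) (Fin L) ℂ,
      f V = ((V - Vstar)ᴴ * K * (V - Vstar)).trace.re
        - (Vstarᴴ * K * Vstar).trace.re := by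
    intro V
    have hsub : (V - Vstar)ᴴ * K * (V - Vstar)
        = Vᴴ * K * V - Vᴴ * (K * Vstar) - Vstarᴴ * K * V + Vstarᴴ * K * Vstar := by
      simp only [Matrix.conjTranspose_sub, Matrix.sub_mul, Matrix.mul_sub, Matrix.mul_assoc]
      abel
    have h3 : (Vᴴ * (K * Vstar)).trace = (α i : ℂ) * star ((W i * (G i)ᴴ * H i * V).trace) := by
      rw [hKV, Matrix.mul_smul, Matrix.trace_smul]
      congr 1
      have : Vᴴ * ((H i)ᴴ * G i * W i) = (W i * (G i)ᴴ * H i * V)ᴴ := by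
        simp [Matrix.conjTranspose_mul, (hW i).1.eq, Matrix.mul_assoc]
      rw [this, Matrix.trace_conjTranspose]
    have h4 : (Vstarᴴ * K * V).trace = (α i : ℂ) * ((W i * (G i)ᴴ * H i * V).trace) := by
      rw [hVsK, Matrix.smul_mul, Matrix.trace_smul]
      simp [Matrix.mul_assoc]
    have h5 : (Vᴴ * K * V).trace.re
        = (Vᴴ * K₀ * V).trace.re + μ * ((V * Vᴴ).trace).re := by
      have : Vᴴ * K * V = Vᴴ * K₀ * V + (μ : ℂ) • (Vᴴ * V) := by
        rw [hKdef]
        simp [Matrix.mul_add, Matrix.add_mul, Matrix.mul_smul, Matrix.smul_mul]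
      rw [this, Matrix.trace_add, Matrix.trace_smul, Matrix.trace_mul_comm Vᴴ V]
      simp [Complex.add_re, Complex.mul_re, Complex.ofReal_re, Complex.ofReal_im]
    rw [hf V, hsub]
    rw [Matrix.trace_add, Matrix.trace_sub, Matrix.trace_sub, h3, h4]
    simp only [Complex.add_re, Complex.sub_re, h5]
    have : ((α i : ℂ) * star ((W i * (G i)ᴴ * H i * V).trace)).re
        = α i * ((W i * (G i)ᴴ * H i * V).trace).re := by
      simp [Complex.mul_re, Complex.ofReal_re, Complex.ofReal_im]
    rw [this]
    have : ((α i : ℂ) * ((W i * (G i)ᴴ * H i * V).trace)).re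
        = α i * ((W i * (G i)ᴴ * H i * V).trace).re := by
      simp [Complex.mul_re, Complex.ofReal_re, Complex.ofReal_im]
    rw [this]
    ring
  intro V
  rw [key V, key Vstar]
  have h0 : ((Vstar - Vstar)ᴴ * K * (Vstar - Vstar)).trace.re = 0 := by
    simp
  rw [h0]
  have := psd_trace_re_nonneg (hPD.posSemidef.conjTranspose_mul_mul_same (V - Vstar))
  linarith
end
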